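/- Fix an integer j ≥ 0. (a) If U is a subgroup of X_j containing X_j ∩ Y₀, then P(N(U)) ∩ X_j = U. (b) If J' and H' are subgroups of B with X₀ ≤ J' ≤ H' ≤ X_{j+1}, then J = P(J') ∩ X_j and H = P(H') ∩ X_j are subgroups of X_j satisfying N(J) = J', N(H) = H', and J ≤ H; and if moreover J' is a normal subgroup of H', then J is a normal subgroup of H. -/

import Mathlib

/-!
An element of `P(N(U))` has the same right state as some `u ∈ U`, so it differs from `u` by an
element of `Y₀`; within `X_j` that element lies in `X_j ∩ Y₀ ≤ U`. Dually, an element of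
`N(P(K'))` has the same left state as some `c ∈ K'` and differs from it by an element of
`X₀ ≤ K'`. Normality passes from `J' ⊴ H'` to `P(J') ⊴ P(H')` by conjugating the witnesses.
-/

open Pointwise

namespace GroupCodes

variable {S : Type*} [Group S]

/-- The subgroups `Xₙ` of the branch group `B ≤ S × S`: `X₀ = {b ∈ B : b⁻ = 1}` and
`X_{n+1} = {b ∈ B : b⁻ ∈ Xₙ⁺}` (here `b⁻ = b.1`, `b⁺ = b.2`, `U⁺ = snd '' U`). -/
def Xnat (B : Subgroup (S × S)) : ℕ → Subgroup (S × S)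
  | 0 => B ⊓ (MonoidHom.fst S S).ker
  | n + 1 => B ⊓ (Subgroup.map (MonoidHom.snd S S) (Xnat B n)).comap (MonoidHom.fst S S)

/-- The subgroups `Yₙ` of the branch group `B ≤ S × S`: `Y₀ = {b ∈ B : b⁺ = 1}` and
`Y_{n+1} = {b ∈ B : b⁺ ∈ Yₙ⁻}`. -/
def Ynat (B : Subgroup (S × S)) : ℕ → Subgroup (S × S)
  | 0 => B ⊓ (MonoidHom.snd S S).ker
  | n + 1 => B ⊓ (Subgroup.map (MonoidHom.fst S S) (Ynat B n)).comap (MonoidHom.snd S S)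

/-- `X i` for an integer index `i`, trivial for `i < 0`. -/
def X (B : Subgroup (S × S)) (i : ℤ) : Subgroup (S × S) :=
  if i < 0 then ⊥ else Xnat B i.toNat

/-- `Y i` for an integer index `i`, trivial for `i < 0`. -/
def Y (B : Subgroup (S × S)) (i : ℤ) : Subgroup (S × S) :=
  if i < 0 then ⊥ else Ynat B i.toNat

/-- The next-branch set `N(U) = {b ∈ B : b⁻ ∈ U⁺}`. -/
def N (B U : Subgroup (S × S)) : Subgroup (S × S) :=
  B ⊓ (Subgroup.map (MonoidHom.snd S S) U).comap (MonoidHom.fst S S)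

/-- The previous-branch set `P(U) = {b ∈ B : b⁺ ∈ U⁻}`. -/
def P (B U : Subgroup (S × S)) : Subgroup (S × S) :=
  B ⊓ (Subgroup.map (MonoidHom.fst S S) U).comap (MonoidHom.snd S S)

/-- `IsQuotIso J H J' H'` says that `J` (viewed inside `H`) is normal in `H`, `J'` is normal
in `H'`, and there is a group isomorphism `H / J ≅ H' / J'`. -/
def IsQuotIso {G₁ G₂ : Type*} [Group G₁] [Group G₂]
    (J H : Subgroup G₁) (J' H' : Subgroup G₂) : Prop :=
  (J.subgroupOf H).Normal ∧ (J'.subgroupOf H').Normal ∧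
    ∀ [(J.subgroupOf H).Normal] [(J'.subgroupOf H').Normal],
      Nonempty ((H ⧸ J.subgroupOf H) ≃* (H' ⧸ J'.subgroupOf H'))

/-- `T` is a right transversal of `J` inside `H`: `T ⊆ H` and `T` meets every right coset
of `J` contained in `H` in exactly one element. -/
def IsRightTransversalIn {G : Type*} [Group G] (J H : Subgroup G) (T : Set G) : Prop :=
  T ⊆ (H : Set G) ∧ ∀ h ∈ H, ∃! t, t ∈ T ∧ t * h⁻¹ ∈ J

/-- The group of trellis path segments `(b₀, …, bₙ)` with `b_j ∈ F j` and matching states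
`b_j⁺ = b_{j+1}⁻`; a subgroup of the direct product `(S × S)^{n+1}`. -/
def chainSubgroup (n : ℕ) (F : ℤ → Subgroup (S × S)) : Subgroup (Fin (n + 1) → S × S) where
  carrier := {b | (∀ i : Fin (n + 1), b i ∈ F (i : ℤ)) ∧
    ∀ i : Fin n, (b i.castSucc).2 = (b i.succ).1}
  one_mem' := ⟨fun _ => one_mem _, fun _ => rfl⟩
  mul_mem' := by
    rintro a b ⟨ha1, ha2⟩ ⟨hb1, hb2⟩
    refine ⟨fun i => mul_mem (ha1 i) (hb1 i), fun i => ?_⟩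
    simp only [Pi.mul_apply, Prod.snd_mul, Prod.fst_mul, ha2 i, hb2 i]
  inv_mem' := by
    rintro a ⟨ha1, ha2⟩
    refine ⟨fun i => inv_mem (ha1 i), fun i => ?_⟩
    simp only [Pi.inv_apply, Prod.snd_inv, Prod.fst_inv, ha2 i]

/-- `U ⨝ N(U)`: the group of trellis path segments `(b, b')` of length two with `b ∈ U`,
`b' ∈ N(U)` and `b⁺ = b'⁻`; a subgroup of the direct product `(S × S) × (S × S)`. -/
def JoinN (B U : Subgroup (S × S)) : Subgroup ((S × S) × (S × S)) where
  carrier := {p | p.1 ∈ U ∧ p.2 ∈ N B U ∧ p.1.2 = p.2.1}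
  one_mem' := ⟨one_mem _, one_mem _, rfl⟩
  mul_mem' := by
    rintro a b ⟨ha1, ha2, ha3⟩ ⟨hb1, hb2, hb3⟩
    exact ⟨mul_mem ha1 hb1, mul_mem ha2 hb2, by
      simp only [Prod.fst_mul, Prod.snd_mul, ha3, hb3]⟩
  inv_mem' := by
    rintro a ⟨ha1, ha2, ha3⟩
    exact ⟨inv_mem ha1, inv_mem ha2, by
      simp only [Prod.fst_inv, Prod.snd_inv, ha3]⟩


section

variable {B : Subgroup (S × S)}

lemma mem_N_iff {U : Subgroup (S × S)} {b : S × S} :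
    b ∈ N B U ↔ b ∈ B ∧ ∃ u ∈ U, u.2 = b.1 := by
  simp [N]

lemma mem_P_iff {U : Subgroup (S × S)} {b : S × S} :
    b ∈ P B U ↔ b ∈ B ∧ ∃ u ∈ U, u.1 = b.2 := by
  simp [P]

lemma N_le (U : Subgroup (S × S)) : N B U ≤ B := inf_le_left

lemma P_mono {J' H' : Subgroup (S × S)} (h : J' ≤ H') : P B J' ≤ P B H' :=
  inf_le_inf_left B (Subgroup.comap_mono (Subgroup.map_mono h))

lemma Xnat_le (B : Subgroup (S × S)) (n : ℕ) : Xnat B n ≤ B := by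
  cases n <;> exact inf_le_left

lemma X_of_nonneg {j : ℤ} (hj : 0 ≤ j) : X B j = Xnat B j.toNat := by
  rw [X, if_neg (not_lt.mpr hj)]

lemma X_le {j : ℤ} (hj : 0 ≤ j) : X B j ≤ B := by
  rw [X_of_nonneg hj]
  exact Xnat_le B _

lemma X_add_one {j : ℤ} (hj : 0 ≤ j) : X B (j + 1) = N B (X B j) := by
  rw [X_of_nonneg hj, X_of_nonneg (by omega), show (j + 1).toNat = j.toNat + 1 by omega]
  rfl

lemma X_zero (B : Subgroup (S × S)) : X B 0 = B ⊓ (MonoidHom.fst S S).ker := rfl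

lemma Y_zero (B : Subgroup (S × S)) : Y B 0 = B ⊓ (MonoidHom.snd S S).ker := rfl

lemma le_P_N (hB : Subgroup.map (MonoidHom.fst S S) B = ⊤) {U : Subgroup (S × S)}
    (hU : U ≤ B) : U ≤ P B (N B U) := by
  intro u hu
  have hsurj : u.2 ∈ B.map (MonoidHom.fst S S) := by
    rw [hB]
    exact Subgroup.mem_top _
  obtain ⟨b, hb, hb1⟩ := Subgroup.mem_map.mp hsurj
  exact mem_P_iff.mpr ⟨hU hu, b, mem_N_iff.mpr ⟨hb, u, hu, hb1.symm⟩, hb1⟩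

lemma P_N_inf_le {U V : Subgroup (S × S)} (hVB : V ≤ B) (hUV : U ≤ V)
    (hVU : V ⊓ Y B 0 ≤ U) : P B (N B U) ⊓ V ≤ U := by
  intro b hb
  obtain ⟨hbP, hbV⟩ := Subgroup.mem_inf.mp hb
  obtain ⟨hbB, c, hcN, hc1⟩ := mem_P_iff.mp hbP
  obtain ⟨-, u, hu, hu2⟩ := mem_N_iff.mp hcN
  have hbu : b * u⁻¹ ∈ V ⊓ Y B 0 := by
    rw [Y_zero, Subgroup.mem_inf, Subgroup.mem_inf, MonoidHom.mem_ker]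
    refine ⟨mul_mem hbV (inv_mem (hUV hu)), mul_mem hbB (inv_mem (hVB (hUV hu))), ?_⟩
    simp [hu2, hc1]
  simpa using mul_mem (hVU hbu) hu

lemma N_P_inf_le {K' V : Subgroup (S × S)} (hK'B : K' ≤ B) (hX0 : X B 0 ≤ K') :
    N B (P B K' ⊓ V) ≤ K' := by
  intro b hb
  obtain ⟨hbB, a, ha, ha2⟩ := mem_N_iff.mp hb
  obtain ⟨haP, -⟩ := Subgroup.mem_inf.mp ha
  obtain ⟨-, c, hc, hc1⟩ := mem_P_iff.mp haP
  have hbc : b * c⁻¹ ∈ X B 0 := by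
    rw [X_zero, Subgroup.mem_inf, MonoidHom.mem_ker]
    refine ⟨mul_mem hbB (inv_mem (hK'B hc)), ?_⟩
    simp [hc1, ha2]
  simpa using mul_mem (hX0 hbc) hc

lemma le_N_P_inf {K' V : Subgroup (S × S)} (hVB : V ≤ B) (hK' : K' ≤ N B V) :
    K' ≤ N B (P B K' ⊓ V) := by
  intro c hc
  obtain ⟨hcB, a, ha, ha2⟩ := mem_N_iff.mp (hK' hc)
  exact mem_N_iff.mpr ⟨hcB, a, ⟨mem_P_iff.mpr ⟨hVB ha, c, hc, ha2.symm⟩, ha⟩, ha2⟩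

lemma P_inf_normal {J' H' V : Subgroup (S × S)} (hJH' : J' ≤ H')
    (hN : (J'.subgroupOf H').Normal) :
    ((P B J' ⊓ V).subgroupOf (P B H' ⊓ V)).Normal := by
  rw [Subgroup.normal_subgroupOf_iff (inf_le_inf_right V (P_mono hJH'))]
  intro x g hx hg
  obtain ⟨hxP, hxV⟩ := Subgroup.mem_inf.mp hx
  obtain ⟨hgP, hgV⟩ := Subgroup.mem_inf.mp hg
  refine Subgroup.mem_inf.mpr ⟨?_, mul_mem (mul_mem hgV hxV) (inv_mem hgV)⟩
  obtain ⟨hxB, cx, hcx, hcx1⟩ := mem_P_iff.mp hxP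
  obtain ⟨hgB, cg, hcg, hcg1⟩ := mem_P_iff.mp hgP
  have hconj : cg * cx * cg⁻¹ ∈ J' :=
    (Subgroup.normal_subgroupOf_iff hJH').mp hN cx cg hcx hcg
  exact mem_P_iff.mpr ⟨mul_mem (mul_mem hgB hxB) (inv_mem hgB), _, hconj, by simp [hcx1, hcg1]⟩

end

theorem previous_branch_inverse_general
    (B : Subgroup (S × S))
    (hB1 : Subgroup.map (MonoidHom.fst S S) B = ⊤)
    (j : ℤ) (hj : 0 ≤ j) :
    (∀ U : Subgroup (S × S), U ≤ X B j → X B j ⊓ Y B 0 ≤ U →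
      P B (N B U) ⊓ X B j = U) ∧
    (∀ J' H' : Subgroup (S × S), X B 0 ≤ J' → J' ≤ H' → H' ≤ X B (j + 1) →
      P B J' ⊓ X B j ≤ X B j ∧
      P B H' ⊓ X B j ≤ X B j ∧
      N B (P B J' ⊓ X B j) = J' ∧
      N B (P B H' ⊓ X B j) = H' ∧
      P B J' ⊓ X B j ≤ P B H' ⊓ X B j ∧
      ((J'.subgroupOf H').Normal →
        ((P B J' ⊓ X B j).subgroupOf (P B H' ⊓ X B j)).Normal)) := by
  have hXB : X B j ≤ B := X_le hj
  refine ⟨fun U hUX hYU => le_antisymm (P_N_inf_le hXB hUX hYU)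
    (le_inf (le_P_N hB1 (hUX.trans hXB)) hUX), fun J' H' hXJ' hJH' hH'X => ?_⟩
  rw [X_add_one hj] at hH'X
  have hN_P : ∀ K', X B 0 ≤ K' → K' ≤ H' → N B (P B K' ⊓ X B j) = K' := fun K' hX0 hKH' =>
    le_antisymm (N_P_inf_le (hKH'.trans (hH'X.trans (N_le _))) hX0)
      (le_N_P_inf hXB (hKH'.trans hH'X))
  exact ⟨inf_le_right, inf_le_right, hN_P J' hXJ' hJH', hN_P H' (hXJ'.trans hJH') le_rfl,
    inf_le_inf_right _ (P_mono hJH'), P_inf_normal hJH'⟩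

/-- (a) if `X_j ∩ Y₀ ≤ U ≤ X_j`, then `P(N(U)) ∩ X_j = U`;
(b) for `X₀ ≤ J' ≤ H' ≤ X_{j+1}`, the subgroups `J = P(J') ∩ X_j` and `H = P(H') ∩ X_j`
of `X_j` satisfy `N(J) = J'`, `N(H) = H'`, `J ≤ H`, and `J' ⊴ H'` implies `J ⊴ H`. -/
theorem previous_branch_inverse
    (B : Subgroup (S × S))
    (hB1 : Subgroup.map (MonoidHom.fst S S) B = ⊤)
    (hB2 : Subgroup.map (MonoidHom.snd S S) B = ⊤)
    (j : ℤ) (hj : 0 ≤ j) :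
    (∀ U : Subgroup (S × S), U ≤ X B j → X B j ⊓ Y B 0 ≤ U →
      P B (N B U) ⊓ X B j = U) ∧
    (∀ J' H' : Subgroup (S × S), X B 0 ≤ J' → J' ≤ H' → H' ≤ X B (j + 1) →
      P B J' ⊓ X B j ≤ X B j ∧
      P B H' ⊓ X B j ≤ X B j ∧
      N B (P B J' ⊓ X B j) = J' ∧
      N B (P B H' ⊓ X B j) = H' ∧
      P B J' ⊓ X B j ≤ P B H' ⊓ X B j ∧
      ((J'.subgroupOf H').Normal →
        ((P B J' ⊓ X B j).subgroupOf (P B H' ⊓ X B j)).Normal)) :=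
  previous_branch_inverse_general B hB1 j hj

end GroupCodes
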